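/- Let G be a balanced bipartite graph with parts X and Y each of size n, let θ > 0, and suppose G contains pairwise edge-disjoint subgraphs: a matching M with e(M) ≥ (1−θ)n; a (1, θn)-dense balanced bipartite graph E (with parts X and Y); and graphs D_X, D_Y (with all edges between X and Y) such that every x′ ∈ X has degree at least 2θn in D_X and every y′ ∈ Y has degree at least 2θn in D_Y. Let x ∈ X and y ∈ Y be vertices not covered by M. Then there exist vertices u, v, m_u, m_v with uv an edge of E, x m_u an edge of D_X, y m_v an edge of D_Y, and u m_u, v m_v edges of M, such that M′ = (M ∪ {x m_u, uv, y m_v}) \ {u m_u, v m_v} is a matching. -/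

import Mathlib

/-!
At most `θn` vertices of `Y` are missed by `M` while `x` has at least `2θn` neighbours in `D_X`,
so at least `θn` of them are matched, say `m_u` to `u`; likewise at least `θn` vertices `v` are
matched to a `D_Y`-neighbour `m_v` of `y`. Density of `E` yields an edge `uv` between the two
sets of `θn` partners. As `E` and `M` are edge-disjoint, `uv ∉ M`, which forces `u ≠ m_v`, so
the two removed edges are distinct and the three added edges have pairwise distinct, free ends.
-/

/-- Degree of a vertex `x` of the first part in a bipartite graph given as a set of pairs. -/
def bdegX {n : ℕ} (G : Finset (Fin n × Fin n)) (x : Fin n) : ℕ :=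
  (G.filter (fun e => e.1 = x)).card

/-- Degree of a vertex `y` of the second part in a bipartite graph given as a set of pairs. -/
def bdegY {n : ℕ} (G : Finset (Fin n × Fin n)) (y : Fin n) : ℕ :=
  (G.filter (fun e => e.2 = y)).card

/-- A set of pairs is a matching if distinct edges share no endpoint. -/
def IsBipMatching {n : ℕ} (M : Finset (Fin n × Fin n)) : Prop :=
  ∀ e ∈ M, ∀ f ∈ M, e ≠ f → e.1 ≠ f.1 ∧ e.2 ≠ f.2

/-- A bipartite graph `E` is `(e, m)`-dense if for every `λ ≥ 1` and all sets `A`, `B` of the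
two parts with `|A| = |B| = λm` there are at least `λ²e` edges of `E` between `A` and `B`. -/
def BipDense {n : ℕ} (E : Finset (Fin n × Fin n)) (e m : ℝ) : Prop :=
  ∀ lam : ℝ, 1 ≤ lam → ∀ A B : Finset (Fin n),
    (A.card : ℝ) = lam * m → (B.card : ℝ) = lam * m →
    lam ^ 2 * e ≤ ((E.filter (fun p => p.1 ∈ A ∧ p.2 ∈ B)).card : ℝ)

open Finset

lemma card_filter_add_card_le_of_injOn {α β : Type*} [Fintype β] {s : Finset α} {f : α → β}
    (hf : Set.InjOn f s) (p : β → Prop) [DecidablePred p] :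
    #{b | p b} + #s ≤ Fintype.card β + #{a ∈ s | p (f a)} := by
  classical
  set P : Finset β := {b | p b}
  have hinter : #(P ∩ s.image f) = #{a ∈ s | p (f a)} := by
    rw [inter_comm, ← filter_mem_eq_inter]
    simp only [P, mem_filter, mem_univ, true_and]
    rw [filter_image, card_image_of_injOn (hf.mono (filter_subset _ s))]
  have := card_inter_add_card_union P (s.image f)
  have := card_le_univ (P ∪ s.image f)
  rw [card_image_of_injOn hf] at *
  omega

lemma bdegX_eq_card_filter {n : ℕ} (D : Finset (Fin n × Fin n)) (x : Fin n) :
    bdegX D x = #{m | (x, m) ∈ D} := by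
  refine card_nbij' Prod.snd (fun m => (x, m)) ?_ (fun _ _ => by simp_all) ?_ (fun _ _ => rfl) <;>
  · rintro ⟨a, b⟩ he
    simp only [coe_filter, Set.mem_ofPred_eq] at he
    obtain ⟨he, rfl⟩ := he
    simp [he]

lemma bdegY_eq_card_filter {n : ℕ} (D : Finset (Fin n × Fin n)) (y : Fin n) :
    bdegY D y = #{m | (m, y) ∈ D} := by
  refine card_nbij' Prod.fst (fun m => (m, y)) ?_ (fun _ _ => by simp_all) ?_ (fun _ _ => rfl) <;>
  · rintro ⟨a, b⟩ he
    simp only [coe_filter, Set.mem_ofPred_eq] at he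
    obtain ⟨he, rfl⟩ := he
    simp [he]

lemma BipDense.exists_mem_of_le_card {n : ℕ} {E : Finset (Fin n × Fin n)} {e m : ℝ}
    (hE : BipDense E e m) (he : 0 < e) (hm : 0 < m) {A B : Finset (Fin n)}
    (hA : m ≤ #A) (hB : m ≤ #B) : ∃ p ∈ E, p.1 ∈ A ∧ p.2 ∈ B := by
  obtain ⟨A', hA', hA'card⟩ := exists_subset_card_eq (min_le_left #A #B)
  obtain ⟨B', hB', hB'card⟩ := exists_subset_card_eq (min_le_right #A #B)
  have hmk : m ≤ ((min #A #B : ℕ) : ℝ) := by rw [Nat.cast_min]; exact le_min hA hB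
  have hk : ((min #A #B : ℕ) : ℝ) = (min #A #B : ℕ) / m * m :=
    (div_mul_cancel₀ _ hm.ne').symm
  have hdense :=
    hE _ ((one_le_div hm).mpr hmk) A' B' (by rw [hA'card, ← hk]) (by rw [hB'card, ← hk])
  have hpos : (0 : ℝ) < #{p ∈ E | p.1 ∈ A' ∧ p.2 ∈ B'} :=
    (mul_pos (pow_pos (div_pos (hm.trans_le hmk) hm) 2) he).trans_le hdense
  obtain ⟨p, hp⟩ := card_pos.mp (Nat.cast_pos.mp hpos)
  rw [mem_filter] at hp
  exact ⟨p, hp.1, hA' hp.2.1, hB' hp.2.2⟩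

namespace IsBipMatching

variable {n : ℕ} {M : Finset (Fin n × Fin n)}

lemma injOn_fst (hM : IsBipMatching M) : Set.InjOn Prod.fst (M : Set (Fin n × Fin n)) :=
  fun e he f hf h => by_contra fun hne => (hM e he f hf hne).1 h

lemma injOn_snd (hM : IsBipMatching M) : Set.InjOn Prod.snd (M : Set (Fin n × Fin n)) :=
  fun e he f hf h => by_contra fun hne => (hM e he f hf hne).2 h

lemma subset (hM : IsBipMatching M) {M' : Finset (Fin n × Fin n)} (h : M' ⊆ M) :
    IsBipMatching M' :=
  fun e he f hf => hM e (h he) f (h hf)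

lemma insert (hM : IsBipMatching M) {e : Fin n × Fin n}
    (he : ∀ f ∈ M, f.1 ≠ e.1 ∧ f.2 ≠ e.2) : IsBipMatching (insert e M) := by
  intro a ha b hb hab
  rw [mem_insert] at ha hb
  rcases ha with rfl | ha <;> rcases hb with rfl | hb
  · exact absurd rfl hab
  · exact ⟨(he b hb).1.symm, (he b hb).2.symm⟩
  · exact he a ha
  · exact hM a ha b hb hab

lemma rotate (hM : IsBipMatching M) {x y u v mu mv : Fin n}
    (hu : (u, mu) ∈ M) (hv : (mv, v) ∈ M) (huv : (u, v) ∉ M)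
    (hx : ∀ e ∈ M, e.1 ≠ x) (hy : ∀ e ∈ M, e.2 ≠ y) :
    IsBipMatching ((M ∪ {(x, mu), (u, v), (mv, y)}) \ {(u, mu), (mv, v)}) := by
  have hu_mv : u ≠ mv := by
    rintro rfl
    have : mu = v := congrArg Prod.snd (hM.injOn_fst hu hv rfl)
    exact huv (this ▸ hu)
  have hmu_v : mu ≠ v := (hM _ hu _ hv (by simp [hu_mv])).2
  have hu_x : u ≠ x := hx _ hu
  have hmv_x : mv ≠ x := hx _ hv
  have hmu_y : mu ≠ y := hy _ hu
  have hv_y : v ≠ y := hy _ hv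
  set M₀ := M \ {(u, mu), (mv, v)}
  have hfree : ∀ f ∈ M₀, (f.1 ≠ u ∧ f.2 ≠ mu) ∧ (f.1 ≠ mv ∧ f.2 ≠ v) := by
    intro f hf
    simp only [M₀, mem_sdiff, mem_insert, mem_singleton, not_or] at hf
    exact ⟨hM f hf.1 _ hu hf.2.1, hM f hf.1 _ hv hf.2.2⟩
  have hset : (M ∪ {(x, mu), (u, v), (mv, y)}) \ {(u, mu), (mv, v)} =
      Insert.insert (x, mu) (Insert.insert (u, v) (Insert.insert (mv, y) M₀)) := by
    ext e
    simp only [M₀, mem_sdiff, mem_union, mem_insert, mem_singleton]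
    grind
  rw [hset]
  refine ((hM.subset sdiff_subset).insert ?_).insert ?_ |>.insert ?_
  · exact fun f hf => ⟨(hfree f hf).2.1, hy f (sdiff_subset hf)⟩
  · refine forall_mem_insert _ _ _ |>.mpr ⟨⟨hu_mv.symm, hv_y.symm⟩, ?_⟩
    exact fun f hf => ⟨(hfree f hf).1.1, (hfree f hf).2.2⟩
  · refine forall_mem_insert _ _ _ |>.mpr ⟨⟨hu_x, hmu_v.symm⟩, ?_⟩
    refine forall_mem_insert _ _ _ |>.mpr ⟨⟨hmv_x, hmu_y.symm⟩, ?_⟩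
    exact fun f hf => ⟨hx f (sdiff_subset hf), (hfree f hf).1.2⟩

lemma bdegX_add_card_le_card_image (hM : IsBipMatching M) (D : Finset (Fin n × Fin n))
    (x : Fin n) : bdegX D x + #M ≤ n + #({e ∈ M | (x, e.2) ∈ D}.image Prod.fst) := by
  rw [bdegX_eq_card_filter, card_image_of_injOn (hM.injOn_fst.mono (filter_subset _ M))]
  simpa using card_filter_add_card_le_of_injOn hM.injOn_snd (fun m => (x, m) ∈ D)

lemma bdegY_add_card_le_card_image (hM : IsBipMatching M) (D : Finset (Fin n × Fin n))
    (y : Fin n) : bdegY D y + #M ≤ n + #({e ∈ M | (e.1, y) ∈ D}.image Prod.snd) := by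
  rw [bdegY_eq_card_filter, card_image_of_injOn (hM.injOn_snd.mono (filter_subset _ M))]
  simpa using card_filter_add_card_le_of_injOn hM.injOn_fst (fun m => (m, y) ∈ D)

end IsBipMatching

/-- The matching-rotation lemma: given edge-disjoint subgraphs `M` (a large
matching), a `(1, θn)`-dense graph `E`, and graphs `DX`, `DY` of minimum degree `≥ 2θn` in a
balanced bipartite graph `G`, and vertices `x ∈ X`, `y ∈ Y` uncovered by `M`, one can enlarge
`M` by a rotation through edges of `E`, `DX`, `DY`. -/
theorem statement_12 :
    ∀ (n : ℕ) (θ : ℝ), 0 < θ →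
    ∀ G M E DX DY : Finset (Fin n × Fin n),
      M ⊆ G → E ⊆ G → DX ⊆ G → DY ⊆ G →
      Disjoint M E → Disjoint M DX → Disjoint M DY →
      Disjoint E DX → Disjoint E DY → Disjoint DX DY →
      IsBipMatching M → (1 - θ) * n ≤ (M.card : ℝ) →
      BipDense E 1 (θ * n) →
      (∀ x' : Fin n, 2 * θ * n ≤ (bdegX DX x' : ℝ)) →
      (∀ y' : Fin n, 2 * θ * n ≤ (bdegY DY y' : ℝ)) →
      ∀ x y : Fin n, (∀ e ∈ M, e.1 ≠ x) → (∀ e ∈ M, e.2 ≠ y) →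
      ∃ u v mu mv : Fin n,
        (u, v) ∈ E ∧ (x, mu) ∈ DX ∧ (mv, y) ∈ DY ∧
        (u, mu) ∈ M ∧ (mv, v) ∈ M ∧
        IsBipMatching ((M ∪ {(x, mu), (u, v), (mv, y)}) \ {(u, mu), (mv, v)}) := by
  intro n θ hθ G M E DX DY _ _ _ _ hME _ _ _ _ _ hM hMcard hE hdegX hdegY x y hx hy
  have hθn : 0 < θ * n := mul_pos hθ (by exact_mod_cast x.pos)
  have hA := hM.bdegX_add_card_le_card_image DX x
  have hB := hM.bdegY_add_card_le_card_image DY y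
  obtain ⟨⟨u, v⟩, huv, hu, hv⟩ := hE.exists_mem_of_le_card one_pos hθn
    (by have := hdegX x; rify at hA; linarith) (by have := hdegY y; rify at hB; linarith)
  simp only [mem_image, mem_filter] at hu hv
  obtain ⟨⟨_, mu⟩, ⟨humu, hxmu⟩, rfl⟩ := hu
  obtain ⟨⟨mv, _⟩, ⟨hmvv, hmvy⟩, rfl⟩ := hv
  exact ⟨_, _, mu, mv, huv, hxmu, hmvy, humu, hmvv,
    hM.rotate humu hmvv (disjoint_right.mp hME huv) hx hy⟩
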